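/- Let G = (A, B, E) be a finite connected bipartite graph with at least two vertices. Then α(G) > |V(G)|/2 if and only if |core(G)| ≥ 2. -/

import Mathlib

/-- A set of vertices is independent if no two of its vertices are adjacent. -/
def IsIndep {V : Type*} (G : SimpleGraph V) (s : Set V) : Prop :=
  ∀ u ∈ s, ∀ w ∈ s, ¬ G.Adj u w

open Classical in
/-- The independence number `α(G)`: the maximum cardinality of an independent set. -/
noncomputable def indepNum {V : Type*} (G : SimpleGraph V) [Fintype V] : ℕ :=
  Nat.findGreatest (fun n => ∃ s : Set V, IsIndep G s ∧ s.ncard = n) (Fintype.card V)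

/-- A matching: a set of edges of `G` that are pairwise vertex-disjoint. -/
def IsMatchingSet {V : Type*} (G : SimpleGraph V) (M : Finset (Sym2 V)) : Prop :=
  (↑M : Set (Sym2 V)) ⊆ G.edgeSet ∧
    ∀ e ∈ M, ∀ f ∈ M, e ≠ f → ∀ x : V, ¬(x ∈ e ∧ x ∈ f)

open Classical in
/-- The matching number `μ(G)`: the maximum cardinality of a matching. -/
noncomputable def matchNum {V : Type*} (G : SimpleGraph V) [Fintype V] : ℕ :=
  Nat.findGreatest (fun n => ∃ M : Finset (Sym2 V), IsMatchingSet G M ∧ M.card = n)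
    (Fintype.card V)

/-- A maximum independent set: an independent set of cardinality `α(G)`. -/
def IsMaxIndep {V : Type*} (G : SimpleGraph V) [Fintype V] (s : Set V) : Prop :=
  IsIndep G s ∧ s.ncard = indepNum G

/-- `core(G)`: the intersection of all maximum independent sets of `G`. -/
def core {V : Type*} (G : SimpleGraph V) [Fintype V] : Set V :=
  {v : V | ∀ s : Set V, IsMaxIndep G s → v ∈ s}

/-- `G` is a König-Egerváry graph if `α(G) + μ(G) = |V(G)|`. -/
def IsKonigEgervary {V : Type*} (G : SimpleGraph V) [Fintype V] : Prop :=
  indepNum G + matchNum G = Fintype.card V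

/-- `G - v`: the subgraph of `G` induced on `V \ {v}`. -/
def deleteVert {V : Type*} (G : SimpleGraph V) (v : V) : SimpleGraph {u : V // u ≠ v} :=
  SimpleGraph.comap Subtype.val G

/-- A perfect matching: a matching covering all vertices of `G`. -/
def HasPerfectMatching {V : Type*} (G : SimpleGraph V) : Prop :=
  ∃ M : Finset (Sym2 V), IsMatchingSet G M ∧ ∀ v : V, ∃ e ∈ M, v ∈ e

/-- `N(A)`: the set of all vertices adjacent to some vertex of `A`. -/
def nbhd {V : Type*} (G : SimpleGraph V) (A : Set V) : Set V :=
  {w : V | ∃ u ∈ A, G.Adj u w}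


/-!
Bipartite graphs are König–Egerváry: by Hall's theorem the complement of a maximum independent
set `S` can be matched into `S`, since a set `X ⊆ A \ S` with fewer neighbours in `S` than
elements could be swapped into `S`. Such a matching covers `|V| - α` vertices outside any other
maximum independent set `T`, so a vertex of `S` that it leaves uncovered must lie in `T`, i.e.
in the core. If `2α > |V|` some vertex `v ∈ S` is uncovered; a neighbour `u` of `v` is matched
to some `w ≠ v`, and rematching `u` to `v` leaves `w` uncovered, so `v, w ∈ core G`. If
`2α ≤ |V|`, both `A` and `B` are maximum independent sets, so `core G ⊆ A ∩ B = ∅`.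
-/

section

variable {V : Type*} {G : SimpleGraph V}

-- The matching `{{x, f x} | x ∈ X}` of `X` into `S`, encoded by its choice function.
def MatchesInto (G : SimpleGraph V) (X S : Set V) (f : V → V) : Prop :=
  Set.InjOn f X ∧ ∀ x ∈ X, G.Adj x (f x) ∧ f x ∈ S

lemma MatchesInto.update [DecidableEq V] {X S : Set V} {f : V → V}
    (hf : MatchesInto G X S f) {u v : V} (hu : u ∈ X) (hv : v ∈ S) (hvf : v ∉ f '' X)
    (huv : G.Adj u v) :
    MatchesInto G X S (Function.update f u v) := by
  refine ⟨fun x hx y hy hxy => ?_, fun x hx => ?_⟩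
  · by_cases hxu : x = u <;> by_cases hyu : y = u
    · rw [hxu, hyu]
    · rw [hxu, Function.update_self, Function.update_of_ne hyu] at hxy
      exact absurd ⟨y, hy, hxy.symm⟩ hvf
    · rw [hyu, Function.update_self, Function.update_of_ne hxu] at hxy
      exact absurd ⟨x, hx, hxy⟩ hvf
    · rw [Function.update_of_ne hxu, Function.update_of_ne hyu] at hxy
      exact hf.1 hx hy hxy
  · by_cases hxu : x = u
    · subst hxu
      simpa only [Function.update_self] using ⟨huv, hv⟩
    · simpa only [Function.update_of_ne hxu] using hf.2 x hx

lemma MatchesInto.notMem_image_update [DecidableEq V] {X S : Set V} {f : V → V}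
    (hf : MatchesInto G X S f) {u v : V} (hu : u ∈ X) (hvf : v ∉ f '' X) :
    f u ∉ Function.update f u v '' X := by
  rintro ⟨x, hx, hxu⟩
  by_cases h : x = u
  · subst h
    rw [Function.update_self] at hxu
    exact hvf ⟨x, hx, hxu.symm⟩
  · rw [Function.update_of_ne h] at hxu
    exact h (hf.1 hx hu hxu)

variable [Fintype V]

open Classical in
lemma IsIndep.ncard_le_indepNum {s : Set V} (hs : IsIndep G s) : s.ncard ≤ indepNum G :=
  Nat.le_findGreatest (by simpa using Set.ncard_le_card s) ⟨s, hs, rfl⟩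

open Classical in
lemma exists_isMaxIndep (G : SimpleGraph V) : ∃ s, IsMaxIndep G s :=
  Nat.findGreatest_spec (P := fun n => ∃ s : Set V, IsIndep G s ∧ s.ncard = n)
    (Nat.zero_le _) ⟨∅, fun _ hu => absurd hu id, Set.ncard_empty V⟩

lemma IsMaxIndep.ncard_le_ncard_inter_nbhd {S P X : Set V} (hS : IsMaxIndep G S)
    (hP : IsIndep G P) (hX : X ⊆ P \ S) : X.ncard ≤ (S ∩ nbhd G X).ncard := by
  have hindep : IsIndep G (S \ nbhd G X ∪ X) := by
    rintro u (⟨huS, huN⟩ | huX) w (⟨hwS, hwN⟩ | hwX) hadj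
    · exact hS.1 u huS w hwS hadj
    · exact huN ⟨w, hwX, hadj.symm⟩
    · exact hwN ⟨u, huX, hadj⟩
    · exact hP u (hX huX).1 w (hX hwX).1 hadj
  have hdisj : Disjoint (S \ nbhd G X) X :=
    Set.disjoint_left.2 fun x hx hxX => (hX hxX).2 hx.1
  have hle := hindep.ncard_le_indepNum
  rw [Set.ncard_union_eq hdisj, ← hS.2] at hle
  have := Set.ncard_inter_add_ncard_sdiff_eq_ncard S (nbhd G X)
  omega

lemma IsMaxIndep.exists_matchesInto_sdiff {S P : Set V} (hS : IsMaxIndep G S)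
    (hP : IsIndep G P) : ∃ f, MatchesInto G (P \ S) S f := by
  classical
  obtain ⟨f, hinj, hf⟩ := (Fintype.all_card_le_filter_rel_iff_exists_injective
    (fun (x : ↥(P \ S)) b => G.Adj x b ∧ b ∈ S)).1 fun X => by
      have hX : Subtype.val '' (↑X : Set ↥(P \ S)) ⊆ P \ S := by
        rintro _ ⟨x, -, rfl⟩
        exact x.2
      have hN : (S ∩ nbhd G (Subtype.val '' (↑X : Set ↥(P \ S))) : Set V)
          = ↑({b | ∃ a ∈ X, G.Adj a b ∧ b ∈ S} : Finset V) := by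
        ext b
        simp only [nbhd, Set.mem_inter_iff, Set.mem_ofPred_eq, Set.mem_image,
          Finset.coe_filter, Finset.mem_univ, true_and, Finset.mem_coe]
        aesop
      have := hS.ncard_le_ncard_inter_nbhd hP hX
      rwa [Set.ncard_image_of_injective _ Subtype.val_injective, Set.ncard_coe_finset, hN,
        Set.ncard_coe_finset] at this
  refine ⟨fun x => if hx : x ∈ P \ S then f ⟨x, hx⟩ else x, fun x hx y hy hxy => ?_,
    fun x hx => ?_⟩
  · simp only [dif_pos hx, dif_pos hy] at hxy
    exact congrArg Subtype.val (hinj hxy)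
  · simpa only [dif_pos hx] using hf ⟨x, hx⟩

lemma IsMaxIndep.exists_matchesInto_compl {A B S : Set V} (hS : IsMaxIndep G S)
    (hA : IsIndep G A) (hB : IsIndep G B) (hUnion : A ∪ B = Set.univ) :
    ∃ f, MatchesInto G Sᶜ S f := by
  classical
  obtain ⟨fA, hfA_inj, hfA⟩ := hS.exists_matchesInto_sdiff hA
  obtain ⟨fB, hfB_inj, hfB⟩ := hS.exists_matchesInto_sdiff hB
  have hmemB : ∀ x ∉ A, x ∈ B := fun x hx =>
    ((hUnion ▸ Set.mem_univ x : x ∈ A ∪ B)).resolve_left hx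
  -- `fA` leaves `A` while `fB` enters it, so the two halves have disjoint images.
  have hcross : ∀ x ∈ A, x ∉ S → ∀ y ∉ A, y ∉ S → fA x ≠ fB y := by
    intro x hxA hxS y hyA hyS hxy
    have hxB : fA x ∉ A := fun h => hA x hxA _ h (hfA x ⟨hxA, hxS⟩).1
    have hyB : fB y ∉ B := fun h => hB y (hmemB y hyA) _ h (hfB y ⟨hmemB y hyA, hyS⟩).1
    exact hyB (hmemB _ (hxy ▸ hxB))
  refine ⟨A.piecewise fA fB, fun x hx y hy hxy => ?_, fun x hx => ?_⟩
  · by_cases hxA : x ∈ A <;> by_cases hyA : y ∈ A <;>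
      simp only [Set.piecewise_eq_of_mem, Set.piecewise_eq_of_notMem, hxA, hyA,
        not_false_eq_true] at hxy
    · exact hfA_inj ⟨hxA, hx⟩ ⟨hyA, hy⟩ hxy
    · exact absurd hxy (hcross x hxA hx y hyA hy)
    · exact absurd hxy.symm (hcross y hyA hy x hxA hx)
    · exact hfB_inj ⟨hmemB x hxA, hx⟩ ⟨hmemB y hyA, hy⟩ hxy
  · by_cases hxA : x ∈ A
    · simpa only [Set.piecewise_eq_of_mem _ _ _ hxA] using hfA x ⟨hxA, hx⟩
    · simpa only [Set.piecewise_eq_of_notMem _ _ _ hxA] using hfB x ⟨hmemB x hxA, hx⟩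

lemma MatchesInto.mem_core {S : Set V} {f : V → V} (hf : MatchesInto G Sᶜ S f)
    (hS : S.ncard ≤ indepNum G) {v : V} (hvS : v ∈ S) (hvf : v ∉ f '' Sᶜ) :
    v ∈ core G := by
  classical
  intro T hT
  by_contra hvT
  -- Each matching edge `{x, f x}` has an endpoint outside `insert v T`, as `T` is independent.
  have hle : Sᶜ.ncard ≤ (insert v T)ᶜ.ncard := by
    refine Set.ncard_le_ncard_of_injOn (fun x => if x ∈ T then f x else x) (fun x hx => ?_)
      (fun x hx y hy hxy => ?_)
    · simp only [Set.mem_compl_iff, Set.mem_insert_iff, not_or]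
      split_ifs with hxT
      · exact ⟨fun h => hvf ⟨x, hx, h⟩, fun h => hT.1 x hxT _ h (hf.2 x hx).1⟩
      · exact ⟨fun h => hx (h ▸ hvS), hxT⟩
    · by_cases hxT : x ∈ T <;> by_cases hyT : y ∈ T <;>
        simp only [hxT, hyT, if_true, if_false] at hxy
      · exact hf.1 hx hy hxy
      · exact absurd (hxy ▸ (hf.2 x hx).2) hy
      · exact absurd (hxy ▸ (hf.2 y hy).2) hx
      · exact hxy
  have hSsum := Set.ncard_add_ncard_compl S
  have hTsum := Set.ncard_add_ncard_compl (insert v T)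
  rw [Set.ncard_insert_of_notMem hvT, hT.2] at hTsum
  omega

lemma two_le_ncard_core_of_lt_two_mul_indepNum {A B : Set V} (hA : IsIndep G A)
    (hB : IsIndep G B) (hUnion : A ∪ B = Set.univ) (hadj : ∀ v, ∃ u, G.Adj v u)
    (h : Fintype.card V < 2 * indepNum G) : 2 ≤ (core G).ncard := by
  classical
  obtain ⟨S, hS⟩ := exists_isMaxIndep G
  obtain ⟨f, hf⟩ := hS.exists_matchesInto_compl hA hB hUnion
  obtain ⟨v, hvS, hvf⟩ : ∃ v ∈ S, v ∉ f '' Sᶜ := by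
    refine Set.exists_mem_notMem_of_ncard_lt_ncard (lt_of_le_of_lt Set.ncard_image_le ?_)
    have hsum := Set.ncard_add_ncard_compl S
    rw [Nat.card_eq_fintype_card] at hsum
    have := hS.2
    omega
  obtain ⟨u, hvu⟩ := hadj v
  have hu : u ∈ Sᶜ := fun huS => hS.1 v hvS u huS hvu
  have hcore : ({v, f u} : Set V) ⊆ core G := by
    rintro x (rfl | rfl)
    · exact hf.mem_core hS.2.le hvS hvf
    · exact (hf.update hu hvS hvf hvu.symm).mem_core hS.2.le (hf.2 u hu).2
        (hf.notMem_image_update hu hvf)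
  calc 2 = ({v, f u} : Set V).ncard :=
        (Set.ncard_pair fun h => hvf ⟨u, hu, h.symm⟩).symm
    _ ≤ (core G).ncard := Set.ncard_le_ncard hcore

lemma core_eq_empty_of_two_mul_indepNum_le {A B : Set V} (hA : IsIndep G A) (hB : IsIndep G B)
    (hUnion : A ∪ B = Set.univ) (hDisj : A ∩ B = ∅) (h : 2 * indepNum G ≤ Fintype.card V) :
    core G = ∅ := by
  have hsum : A.ncard + B.ncard = Fintype.card V := by
    rw [← Set.ncard_union_eq (Set.disjoint_iff_inter_eq_empty.2 hDisj), hUnion, Set.ncard_univ,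
      Nat.card_eq_fintype_card]
  have hAle := hA.ncard_le_indepNum
  have hBle := hB.ncard_le_indepNum
  have hcore : core G ⊆ A ∩ B := fun x hx =>
    ⟨hx A ⟨hA, by omega⟩, hx B ⟨hB, by omega⟩⟩
  exact Set.subset_empty_iff.1 (hDisj ▸ hcore)

end

theorem stmt_8 {V : Type*} [Fintype V] (G : SimpleGraph V) (A B : Set V)
    (hA : IsIndep G A) (hB : IsIndep G B) (hUnion : A ∪ B = Set.univ)
    (hDisj : A ∩ B = ∅) (hConn : G.Connected) (hCard : 2 ≤ Fintype.card V) :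
    2 * indepNum G > Fintype.card V ↔ 2 ≤ (core G).ncard := by
  refine ⟨two_le_ncard_core_of_lt_two_mul_indepNum hA hB hUnion ?_, fun hcore => ?_⟩
  · have : Nontrivial V := Fintype.one_lt_card_iff_nontrivial.1 hCard
    exact hConn.preconnected.exists_adj_of_nontrivial
  · by_contra! hle
    rw [core_eq_empty_of_two_mul_indepNum_le hA hB hUnion hDisj hle, Set.ncard_empty] at hcore
    omega
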